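/- Let N, n be integers with 2 ≤ n and 2n + 1 < N, let y ≥ 0, and let u = u(y) be the unique positive root of c₂(y)u² + c₁(y)u + c₀ = 0 as above. Define c(y) = ((n-1)/(N-2n))·tanh'(y) - (N-n-1)/((N-2n)·u(y)). Then c(y) ≤ -((N-n-1)(N-2n-1))/((N-2n)(N-1)) < 0. -/

import Mathlib

/-!
Since `c₂ > 0 > c₀`, the discriminant is at least `c₁²`, so the positive root satisfies
`u (√(c₁² - 4c₂c₀) + c₁) = -2c₀` and hence `u c₁ ≤ -c₀`. Substituting the definitions of `c₁` and
`c₀`, the difference between `c(y)` and the claimed bound is exactly `(u c₁ + c₀) / (u (N - 1))`,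
which is therefore nonpositive.
-/

/-- `tanh'(y)`. -/
noncomputable def tanhD (y : ℝ) : ℝ := deriv Real.tanh y

/-- The coefficient `c₂(y)` of the quadratic for `u`. -/
noncomputable def c2 (N n y : ℝ) : ℝ := (n + 1 + (n - 1) / (N - 2 * n)) * tanhD y

/-- The coefficient `c₁(y)` of the quadratic for `u`. -/
noncomputable def c1 (N n y : ℝ) : ℝ :=
  (N - 2 * n - 1) * (N - n - 1) / (N - 2 * n) + (N - 1) * (n - 1) * tanhD y / (N - 2 * n)

/-- The constant coefficient `c₀`. -/
noncomputable def c0 (N n : ℝ) : ℝ := -((N - n - 1) * (N - 1) / (N - 2 * n))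

/-- The positive root `u(y)` of `c₂u² + c₁u + c₀ = 0`. -/
noncomputable def uRoot (N n y : ℝ) : ℝ :=
  (-(c1 N n y) + Real.sqrt ((c1 N n y) ^ 2 - 4 * c2 N n y * c0 N n)) / (2 * c2 N n y)

/-- The quantity `c(y)` from the cubic reduction. -/
noncomputable def cFun (N n y : ℝ) : ℝ :=
  (n - 1) / (N - 2 * n) * tanhD y - (N - n - 1) / ((N - 2 * n) * uRoot N n y)

/-- The quantity `a(y)` from the cubic reduction. -/
noncomputable def aFun (N n y : ℝ) : ℝ :=
  (n - 1) / (N - 2 * n) * iteratedDeriv 3 Real.tanh y / 6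

/-- The quantity `b(y)` from the cubic reduction. -/
noncomputable def bFun (N n y : ℝ) : ℝ :=
  (n - 1) / (N - 2 * n) * iteratedDeriv 2 Real.tanh y / 2

/-- The cubic coefficient `λ₃(y, N, n)` at the bifurcation. -/
noncomputable def lam3 (N n y : ℝ) : ℝ :=
  -(N - 1) / 3 + n * (N - n - 1) / (n - 1) *
    (2 * aFun N n y * cFun N n y - 4 * (bFun N n y) ^ 2) / (cFun N n y) ^ 5

lemma hasDerivAt_tanh (x : ℝ) : HasDerivAt Real.tanh (1 / Real.cosh x ^ 2) x := by
  have h : HasDerivAt (fun y => Real.sinh y / Real.cosh y)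
      ((Real.cosh x * Real.cosh x - Real.sinh x * Real.sinh x) / Real.cosh x ^ 2) x :=
    (Real.hasDerivAt_sinh x).div (Real.hasDerivAt_cosh x) (Real.cosh_pos x).ne'
  have hone : Real.cosh x * Real.cosh x - Real.sinh x * Real.sinh x = 1 := by
    nlinarith [Real.cosh_sq_sub_sinh_sq x]
  rw [hone] at h
  exact h.congr_of_eventuallyEq (.of_forall Real.tanh_eq_sinh_div_cosh)

lemma tanhD_pos (y : ℝ) : 0 < tanhD y := by
  rw [tanhD, (hasDerivAt_tanh y).deriv]
  positivity

section QuadraticRoot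

variable {a b c : ℝ}

lemma quadratic_root_mul_sqrt_add (ha : 0 < a) (hac : a * c ≤ 0) :
    (-b + √(b ^ 2 - 4 * a * c)) / (2 * a) * (√(b ^ 2 - 4 * a * c) + b) = -2 * c := by
  have hsq : √(b ^ 2 - 4 * a * c) ^ 2 = b ^ 2 - 4 * a * c :=
    Real.sq_sqrt (by nlinarith [sq_nonneg b])
  field_simp
  linear_combination hsq

lemma quadratic_root_pos (ha : 0 < a) (hb : 0 ≤ b) (hc : c < 0) :
    0 < (-b + √(b ^ 2 - 4 * a * c)) / (2 * a) := by
  refine div_pos (sub_pos.mpr ?_ |>.trans_eq (neg_add_eq_sub _ _).symm) (by positivity)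
  calc b = √(b ^ 2) := (Real.sqrt_sq hb).symm
    _ < √(b ^ 2 - 4 * a * c) := Real.sqrt_lt_sqrt (sq_nonneg b) (by nlinarith)

lemma quadratic_root_mul_le (ha : 0 < a) (hb : 0 ≤ b) (hc : c < 0) :
    (-b + √(b ^ 2 - 4 * a * c)) / (2 * a) * b ≤ -c := by
  have hroot := quadratic_root_mul_sqrt_add (b := b) ha (mul_neg_of_pos_of_neg ha hc).le
  have hr := quadratic_root_pos ha hb hc
  have hsqrt : b ≤ √(b ^ 2 - 4 * a * c) := by
    calc b = √(b ^ 2) := (Real.sqrt_sq hb).symm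
      _ ≤ √(b ^ 2 - 4 * a * c) := Real.sqrt_le_sqrt (by nlinarith)
  nlinarith [mul_le_mul_of_nonneg_left hsqrt hr.le]

end QuadraticRoot

section Coefficients

variable {N n : ℝ}

lemma c2_pos (hn : 1 ≤ n) (hnN : 2 * n + 1 < N) (y : ℝ) : 0 < c2 N n y := by
  have : 0 ≤ (n - 1) / (N - 2 * n) := div_nonneg (by linarith) (by linarith)
  exact mul_pos (by linarith) (tanhD_pos y)

lemma c1_pos (hn : 1 ≤ n) (hnN : 2 * n + 1 < N) (y : ℝ) : 0 < c1 N n y := by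
  have hfirst : 0 < (N - 2 * n - 1) * (N - n - 1) / (N - 2 * n) :=
    div_pos (mul_pos (by linarith) (by linarith)) (by linarith)
  have hsecond : 0 ≤ (N - 1) * (n - 1) * tanhD y / (N - 2 * n) :=
    div_nonneg (mul_nonneg (mul_nonneg (by linarith) (by linarith)) (tanhD_pos y).le)
      (by linarith)
  exact add_pos_of_pos_of_nonneg hfirst hsecond

lemma c0_neg (hn : 0 ≤ n) (hnN : 2 * n + 1 < N) : c0 N n < 0 :=
  neg_neg_iff_pos.mpr (div_pos (mul_pos (by linarith) (by linarith)) (by linarith))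

lemma uRoot_pos (hn : 1 ≤ n) (hnN : 2 * n + 1 < N) (y : ℝ) : 0 < uRoot N n y :=
  quadratic_root_pos (c2_pos hn hnN y) (c1_pos hn hnN y).le (c0_neg (zero_le_one.trans hn) hnN)

lemma uRoot_mul_c1_le (hn : 1 ≤ n) (hnN : 2 * n + 1 < N) (y : ℝ) :
    uRoot N n y * c1 N n y ≤ -c0 N n :=
  quadratic_root_mul_le (c2_pos hn hnN y) (c1_pos hn hnN y).le (c0_neg (zero_le_one.trans hn) hnN)

end Coefficients

lemma cFun_sub_eq {N n y : ℝ} (hN1 : N - 1 ≠ 0) (hu : uRoot N n y ≠ 0) :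
    cFun N n y - -((N - n - 1) * (N - 2 * n - 1)) / ((N - 2 * n) * (N - 1)) =
      (uRoot N n y * c1 N n y + c0 N n) / (uRoot N n y * (N - 1)) := by
  rw [cFun, c1, c0]
  field_simp
  ring

lemma cFun_le {N n : ℝ} (hn : 1 ≤ n) (hnN : 2 * n + 1 < N) (y : ℝ) :
    cFun N n y ≤ -((N - n - 1) * (N - 2 * n - 1)) / ((N - 2 * n) * (N - 1)) := by
  have hu := uRoot_pos hn hnN y
  have hdiff := cFun_sub_eq (y := y) (by linarith) hu.ne'
  have : (uRoot N n y * c1 N n y + c0 N n) / (uRoot N n y * (N - 1)) ≤ 0 :=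
    div_nonpos_of_nonpos_of_nonneg (by linarith [uRoot_mul_c1_le hn hnN y])
      (mul_pos hu (by linarith)).le
  linarith

theorem stmt_7_general (N n : ℤ) (hn : 2 ≤ n) (hnN : 2 * n + 1 < N) (y : ℝ) :
    cFun (N : ℝ) (n : ℝ) y ≤
      -(((N : ℝ) - (n : ℝ) - 1) * ((N : ℝ) - 2 * (n : ℝ) - 1)) /
        (((N : ℝ) - 2 * (n : ℝ)) * ((N : ℝ) - 1)) ∧
    -(((N : ℝ) - (n : ℝ) - 1) * ((N : ℝ) - 2 * (n : ℝ) - 1)) /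
        (((N : ℝ) - 2 * (n : ℝ)) * ((N : ℝ) - 1)) < 0 := by
  have hn' : (1 : ℝ) ≤ n := by exact_mod_cast hn.trans' one_le_two
  have hnN' : 2 * (n : ℝ) + 1 < N := by exact_mod_cast hnN
  refine ⟨cFun_le hn' hnN' y, div_neg_of_neg_of_pos ?_ ?_⟩
  · exact neg_neg_iff_pos.mpr (mul_pos (by linarith) (by linarith))
  · exact mul_pos (by linarith) (by linarith)

/-- `c(y)` is bounded above by a negative constant. -/
theorem stmt_7 (N n : ℤ) (hn : 2 ≤ n) (hnN : 2 * n + 1 < N) (y : ℝ) (hy : 0 ≤ y) :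
    cFun (N : ℝ) (n : ℝ) y ≤
      -(((N : ℝ) - (n : ℝ) - 1) * ((N : ℝ) - 2 * (n : ℝ) - 1)) /
        (((N : ℝ) - 2 * (n : ℝ)) * ((N : ℝ) - 1)) ∧
    -(((N : ℝ) - (n : ℝ) - 1) * ((N : ℝ) - 2 * (n : ℝ) - 1)) /
        (((N : ℝ) - 2 * (n : ℝ)) * ((N : ℝ) - 1)) < 0 :=
  stmt_7_general N n hn hnN y
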